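/- Let λ > 0, m ≥ 2, let x_1 < x_2 < … < x_m be real numbers and w_1, …, w_m real weights. For 1 ≤ i ≤ m and j ≥ 0 define Φ(i,j) ∈ ℝ ∪ {−∞} as the supremum over all index chains 1 = v_0 < v_1 < … < v_j ≤ i satisfying x_{v_t} − x_{v_{t−1}} ≥ 2λ for every 1 ≤ t ≤ j, of Σ_{t=1}^{j} w_{v_t} (with Φ(i,j) = −∞ if no such chain exists, and Φ(i,0) = 0). For i ≥ 2 let p(i) be the largest index q < i with x_i − x_q ≥ 2λ, when such q exists. Then for all 2 ≤ i ≤ m and j ≥ 1: if p(i) exists, Φ(i,j) = max( Φ(i−1, j), Φ(p(i), j−1) + w_i ), and if p(i) does not exist, Φ(i,j) = Φ(i−1, j). -/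

import Mathlib

/-!
A path ending at or before vertex `i` either ends at or before `i - 1`, or ends exactly at `i`.
Removing the last vertex `i` of a path of the second kind leaves a `(j - 1)`-link path whose
last vertex `r` is linked to `i`, i.e. `r < i` and `x i - x r ≥ 2λ`; since `x` is increasing,
the vertices `r ≥ 1` linked to `i` are exactly those with `r ≤ p(i)`, and there are none when
`p(i)` does not exist. Taking suprema in `WithBot ℝ` turns the union into a `max` and the
shift by `w i` into `+ w i`.
-/

/-- `Phi lam x w i j` is the maximum weight of a `j`-link path from vertex `1`
within the first `i` vertices: the supremum (in `WithBot ℝ`, i.e. `ℝ ∪ {−∞}`, with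
`sSup ∅ = ⊥`) over all index chains `1 = v 0 < v 1 < … < v j ≤ i` with
`x (v t) − x (v (t−1)) ≥ 2λ` for all `1 ≤ t ≤ j`, of `Σ_{t=1}^{j} w (v t)`. -/
noncomputable def Phi (lam : ℝ) (x w : ℕ → ℝ) (i j : ℕ) : WithBot ℝ :=
  sSup {s : WithBot ℝ | ∃ v : ℕ → ℕ, v 0 = 1 ∧ (∀ t, t < j → v t < v (t + 1)) ∧
    v j ≤ i ∧ (∀ t, 1 ≤ t → t ≤ j → 2 * lam ≤ x (v t) - x (v (t - 1))) ∧
    s = ((∑ t ∈ Finset.Icc 1 j, w (v t) : ℝ) : WithBot ℝ)}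

theorem WithBot.sSup_image_coe_image_add_right {α : Type*} [ConditionallyCompleteLinearOrder α]
    [AddGroup α] [AddRightMono α] {s : Set α} (hs : BddAbove s) (c : α) :
    sSup (((↑) : α → WithBot α) '' ((· + c) '' s)) = sSup (((↑) : α → WithBot α) '' s) + c := by
  rcases s.eq_empty_or_nonempty with rfl | hne
  · simp
  calc sSup (((↑) : α → WithBot α) '' ((· + c) '' s))
      _ = ↑(sSup ((· + c) '' s)) :=
        (WithBot.coe_sSup' (hne.image _) ((OrderIso.addRight c).monotone.map_bddAbove hs)).symm
      _ = ↑(sSup s + c) := congrArg _ ((OrderIso.addRight c).map_csSup' hne hs).symm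
      _ = _ := by rw [WithBot.coe_add, WithBot.coe_sSup' hne hs]

namespace Phi

open Finset

variable (lam : ℝ) (x w : ℕ → ℝ)

def IsLink (a b : ℕ) : Prop := a < b ∧ 2 * lam ≤ x b - x a

def IsPath (k : ℕ) (v : ℕ → ℕ) : Prop := v 0 = 1 ∧ ∀ t < k, IsLink lam x (v t) (v (t + 1))

def pathWeights (k : ℕ) (P : ℕ → Prop) : Set ℝ :=
  (fun v ↦ ∑ t ∈ Icc 1 k, w (v t)) '' {v | IsPath lam x k v ∧ P (v k)}

variable {lam x w}

theorem isPath_succ {k : ℕ} {v : ℕ → ℕ} :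
    IsPath lam x (k + 1) v ↔ IsPath lam x k v ∧ IsLink lam x (v k) (v (k + 1)) := by
  simp only [IsPath, Nat.forall_lt_succ_right, and_assoc]

theorem IsPath.le_last {k : ℕ} {v : ℕ → ℕ} (hv : IsPath lam x k v) {t : ℕ} (ht : t ≤ k) :
    v t ≤ v k :=
  (strictMonoOn_Iic_of_lt_succ fun t ht ↦ (hv.2 t ht).1).monotoneOn ht (Set.mem_Iic.2 le_rfl) ht

theorem IsPath.one_le_last {k : ℕ} {v : ℕ → ℕ} (hv : IsPath lam x k v) : 1 ≤ v k :=
  hv.1 ▸ hv.le_last k.zero_le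

theorem Phi_eq_sSup (i k : ℕ) :
    Phi lam x w i k = sSup ((↑) '' pathWeights lam x w k (· ≤ i)) := by
  have gaps : ∀ v : ℕ → ℕ, (∀ t, 1 ≤ t → t ≤ k → 2 * lam ≤ x (v t) - x (v (t - 1))) ↔
      ∀ t < k, 2 * lam ≤ x (v (t + 1)) - x (v t) := fun v ↦
    ⟨fun h t ht ↦ h (t + 1) t.succ_pos ht, fun h t h1 hk ↦ by
      simpa [Nat.sub_add_cancel h1] using h (t - 1) (by omega)⟩
  rw [Phi, pathWeights, Set.image_image]
  congr 1
  ext s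
  simp only [Set.mem_image, Set.mem_ofPred_eq, IsPath, IsLink, forall_and, gaps]
  constructor
  · rintro ⟨v, h0, hlt, hle, hgap, rfl⟩
    exact ⟨v, ⟨⟨h0, hlt, hgap⟩, hle⟩, rfl⟩
  · rintro ⟨v, ⟨⟨h0, hlt, hgap⟩, hle⟩, rfl⟩
    exact ⟨v, h0, hlt, hle, hgap, rfl⟩

theorem pathWeights_mono {k : ℕ} {P Q : ℕ → Prop} (h : ∀ r, P r → Q r) :
    pathWeights lam x w k P ⊆ pathWeights lam x w k Q :=
  Set.image_mono fun _ hv ↦ ⟨hv.1, h _ hv.2⟩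

theorem pathWeights_congr {k : ℕ} {P Q : ℕ → Prop} (h : ∀ r, 1 ≤ r → (P r ↔ Q r)) :
    pathWeights lam x w k P = pathWeights lam x w k Q := by
  rw [pathWeights, pathWeights]
  congr 1
  ext v
  exact and_congr_right fun hv ↦ h _ hv.one_le_last

theorem pathWeights_eq_empty {k : ℕ} {P : ℕ → Prop} (h : ∀ r, 1 ≤ r → ¬ P r) :
    pathWeights lam x w k P = ∅ :=
  Set.image_eq_empty.2 <| Set.eq_empty_of_forall_notMem fun _ hv ↦ h _ hv.1.one_le_last hv.2

theorem pathWeights_or (k : ℕ) (P Q : ℕ → Prop) :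
    pathWeights lam x w k (fun r ↦ P r ∨ Q r) =
      pathWeights lam x w k P ∪ pathWeights lam x w k Q := by
  rw [pathWeights, pathWeights, pathWeights, ← Set.image_union]
  congr 1
  ext v
  exact and_or_left

theorem bddAbove_pathWeights (k i : ℕ) : BddAbove (pathWeights lam x w k (· ≤ i)) := by
  refine ⟨k * (range (i + 1)).sup' nonempty_range_add_one w, ?_⟩
  rintro _ ⟨v, ⟨hv, hvi⟩, rfl⟩
  calc ∑ t ∈ Icc 1 k, w (v t)
      _ ≤ ∑ _t ∈ Icc 1 k, (range (i + 1)).sup' nonempty_range_add_one w :=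
        sum_le_sum fun t ht ↦ le_sup' w <| mem_range_succ_iff.2 <|
          (hv.le_last (mem_Icc.1 ht).2).trans hvi
      _ = _ := by simp

theorem pathWeights_succ_eq_last (k q : ℕ) :
    pathWeights lam x w (k + 1) (· = q) =
      (· + w q) '' pathWeights lam x w k (IsLink lam x · q) := by
  ext s
  constructor
  · rintro ⟨v, ⟨hv, rfl⟩, rfl⟩
    rw [isPath_succ] at hv
    exact ⟨_, ⟨v, ⟨hv.1, hv.2⟩, rfl⟩, (sum_Icc_succ_top (by omega) _).symm⟩
  · rintro ⟨_, ⟨u, ⟨hu, hlink⟩, rfl⟩, rfl⟩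
    have hagree : ∀ t ≤ k, Function.update u (k + 1) q t = u t := fun t ht ↦
      Function.update_of_ne (by omega) _ _
    refine ⟨Function.update u (k + 1) q, ⟨isPath_succ.2 ⟨?_, ?_⟩, by simp⟩, ?_⟩
    · exact ⟨(hagree 0 k.zero_le).trans hu.1, fun t ht ↦ by
        rw [hagree t ht.le, hagree (t + 1) ht]; exact hu.2 t ht⟩
    · simpa [hagree k le_rfl] using hlink
    · dsimp only
      rw [sum_Icc_succ_top (by omega), Function.update_self]
      congr 1
      exact sum_congr rfl fun t ht ↦ congrArg w (hagree t (mem_Icc.1 ht).2)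

theorem Phi_succ_eq_max (i k : ℕ) :
    Phi lam x w i (k + 1) = max (Phi lam x w (i - 1) (k + 1))
      (sSup ((↑) '' pathWeights lam x w k (IsLink lam x · i)) + w i) := by
  have hsplit : (· ≤ i) = fun r ↦ r ≤ i - 1 ∨ r = i := funext fun r ↦ propext (by omega)
  have hbdd : BddAbove (pathWeights lam x w k (IsLink lam x · i)) :=
    (bddAbove_pathWeights k i).mono (pathWeights_mono fun _ h ↦ h.1.le)
  have hbdd_shift : BddAbove ((· + w i) '' pathWeights lam x w k (IsLink lam x · i)) :=
    (OrderIso.addRight (w i)).monotone.map_bddAbove hbdd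
  rw [Phi_eq_sSup, Phi_eq_sSup, hsplit, pathWeights_or, pathWeights_succ_eq_last, Set.image_union,
    csSup_union' (WithBot.coe_mono.map_bddAbove (bddAbove_pathWeights _ _))
      (WithBot.coe_mono.map_bddAbove hbdd_shift), WithBot.sSup_image_coe_image_add_right hbdd]

theorem isLink_iff_le {i p : ℕ} (hx : MonotoneOn x (Set.Icc 1 p)) (hp : IsLink lam x p i)
    (hmax : ∀ q, 1 ≤ q → IsLink lam x q i → q ≤ p) {r : ℕ} (hr : 1 ≤ r) :
    IsLink lam x r i ↔ r ≤ p :=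
  ⟨hmax r hr, fun hrp ↦ ⟨hrp.trans_lt hp.1, by
    linarith [hp.2, hx ⟨hr, hrp⟩ ⟨hr.trans hrp, le_rfl⟩ hrp]⟩⟩

end Phi

open Phi in
theorem stmt_9_general (lam : ℝ) (m : ℕ) (x w : ℕ → ℝ)
    (hx : ∀ i, 1 ≤ i → i < m → x i < x (i + 1))
    (i j : ℕ) (him : i ≤ m) (hj : 1 ≤ j) :
    (∀ p : ℕ, 1 ≤ p → p < i → 2 * lam ≤ x i - x p →
        (∀ q, 1 ≤ q → q < i → 2 * lam ≤ x i - x q → q ≤ p) →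
        Phi lam x w i j =
          max (Phi lam x w (i - 1) j) (Phi lam x w p (j - 1) + (w i : WithBot ℝ))) ∧
      ((¬ ∃ q, 1 ≤ q ∧ q < i ∧ 2 * lam ≤ x i - x q) →
        Phi lam x w i j = Phi lam x w (i - 1) j) := by
  obtain ⟨k, rfl⟩ := Nat.exists_eq_add_of_le' hj
  refine ⟨fun p _ hpi hgap hmax ↦ ?_, fun hnone ↦ ?_⟩
  · have hxp : MonotoneOn x (Set.Icc 1 p) :=
      (monotoneOn_of_le_succ Set.ordConnected_Icc fun a _ ha hsucc ↦
        (hx a ha.1 (Order.succ_le_iff.1 hsucc.2)).le).mono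
        (Set.Icc_subset_Icc_right (by omega : p ≤ m))
    rw [Phi_succ_eq_max, Nat.add_sub_cancel, Phi_eq_sSup p k, pathWeights_congr fun r hr ↦
      isLink_iff_le hxp ⟨hpi, hgap⟩ (fun q hq h ↦ hmax q hq h.1 h.2) hr]
  · rw [Phi_succ_eq_max,
      pathWeights_eq_empty (P := (IsLink lam x · i)) fun r hr h ↦ hnone ⟨r, hr, h.1, h.2⟩,
      Set.image_empty, WithBot.sSup_empty, WithBot.bot_add, max_bot_right]

/-- Let `λ > 0`, `m ≥ 2`, let `x 1 < x 2 < … < x m` be the sorted coordinates of the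
points on `ℓ` and `w i` the weight of the disk centered at point `i`.  For all
`2 ≤ i ≤ m` and `j ≥ 1`: if `p = p(i)` is the largest index `q < i` with
`x i − x q ≥ 2λ`, then `Φ(i,j) = max (Φ(i−1,j)) (Φ(p,j−1) + w i)`; and if no such
index exists, then `Φ(i,j) = Φ(i−1,j)`. -/
theorem stmt_9 (lam : ℝ) (hlam : 0 < lam) (m : ℕ) (hm : 2 ≤ m) (x w : ℕ → ℝ)
    (hx : ∀ i, 1 ≤ i → i < m → x i < x (i + 1))
    (i j : ℕ) (hi2 : 2 ≤ i) (him : i ≤ m) (hj : 1 ≤ j) :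
    (∀ p : ℕ, 1 ≤ p → p < i → 2 * lam ≤ x i - x p →
        (∀ q, 1 ≤ q → q < i → 2 * lam ≤ x i - x q → q ≤ p) →
        Phi lam x w i j =
          max (Phi lam x w (i - 1) j) (Phi lam x w p (j - 1) + (w i : WithBot ℝ))) ∧
      ((¬ ∃ q, 1 ≤ q ∧ q < i ∧ 2 * lam ≤ x i - x q) →
        Phi lam x w i j = Phi lam x w (i - 1) j) :=
  stmt_9_general lam m x w hx i j him hj
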